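/- For every m ≥ 2, the sum of the first m letters of the classical Kolakoski sequence satisfies (6/5)·m ≤ K_1 + K_2 + … + K_m ≤ (9/5)·m. -/
import Mathlib


/-- Sum of the first `m` letters of `K` (indices `0, …, m-1`), i.e. `K₁ + ⋯ + K_m`
in the paper's 1-indexed notation. -/
def psum (K : ℕ → ℕ) (m : ℕ) : ℕ := ∑ i ∈ Finset.range m, K i

/-- `K` equals the sequence of its own run lengths: the `m`-th run of `K` occupies
exactly the positions in `[psum K m, psum K (m+1))` (hence has length `K m`);
`K` is constant on each such block, and consecutive blocks carry different
symbols (which is exactly maximality of the runs). -/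
def IsRunSelf (K : ℕ → ℕ) : Prop :=
  ∀ m : ℕ,
    (∀ i : ℕ, psum K m ≤ i → i < psum K (m + 1) → K i = K (psum K m)) ∧
    K (psum K m) ≠ K (psum K (m + 1))

/-- The classical Kolakoski sequence, 0-indexed: `K i` is the letter `K_{i+1}` of
the paper.  It takes values in `{1, 2}`, starts with `1`, and equals the
sequence of its own run lengths. -/
def IsKolakoski (K : ℕ → ℕ) : Prop :=
  (∀ n, K n = 1 ∨ K n = 2) ∧ K 0 = 1 ∧ IsRunSelf K

namespace KolAux

variable (K : ℕ → ℕ)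

lemma psum_succ (m : ℕ) : psum K (m + 1) = psum K m + K m :=
  Finset.sum_range_succ K m

lemma psum_ge (hK : IsKolakoski K) (m : ℕ) : m ≤ psum K m := by
  induction m with
  | zero => simp [psum]
  | succ n ih =>
    have h1 : 1 ≤ K n := by rcases hK.1 n with h | h <;> omega
    rw [psum_succ]; omega

lemma exists_run (hK : IsKolakoski K) (i : ℕ) :
    ∃ m, psum K m ≤ i ∧ i < psum K (m + 1) := by
  classical
  have hex : ∃ n, i < psum K n :=
    ⟨i + 1, lt_of_lt_of_le (Nat.lt_succ_self i) (psum_ge K hK (i + 1))⟩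
  have hn : i < psum K (Nat.find hex) := Nat.find_spec hex
  have hn0 : Nat.find hex ≠ 0 := by
    intro h
    rw [h] at hn
    simp [psum] at hn
  obtain ⟨m, hme⟩ := Nat.exists_eq_succ_of_ne_zero hn0
  refine ⟨m, ?_, ?_⟩
  · have := Nat.find_min hex (by omega : m < Nat.find hex)
    omega
  · rw [show Nat.find hex = m + 1 from hme] at hn
    exact hn

lemma no_three (hK : IsKolakoski K) (i : ℕ) :
    ¬ (K i = K (i + 1) ∧ K (i + 1) = K (i + 2)) := by
  rintro ⟨h1, h2⟩
  obtain ⟨m, ha, hb⟩ := exists_run K hK i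
  have hrun := hK.2.2 m
  have hKm2 : K m ≤ 2 := by rcases hK.1 m with h | h <;> omega
  have hbe : psum K (m + 1) = psum K m + K m := psum_succ K m
  have hcase : psum K (m + 1) = i + 1 ∨ psum K (m + 1) = i + 2 := by omega
  rcases hcase with hc | hc
  · have e1 : K i = K (psum K m) := hrun.1 i ha hb
    have e2 : K (i + 1) = K (psum K (m + 1)) := by rw [hc]
    exact hrun.2 (by rw [← e1, h1, e2])
  · have e1 : K (i + 1) = K (psum K m) := hrun.1 (i + 1) (by omega) (by omega)
    have e2 : K (i + 2) = K (psum K (m + 1)) := by rw [hc]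
    exact hrun.2 (by rw [← e1, h2, e2])

lemma K_vals (hK : IsKolakoski K) : K 0 = 1 ∧ K 1 = 2 ∧ K 2 = 2 ∧ K 3 = 1 := by
  have h0 := hK.2.1
  have r0 := hK.2.2 0
  have r1 := hK.2.2 1
  have p0 : psum K 0 = 0 := by simp [psum]
  have p1 : psum K 1 = 1 := by simp [psum, h0]
  have hK1 : K 1 = 2 := by
    have := r0.2
    rw [p0, p1] at this
    rcases hK.1 1 with h | h
    · exact absurd (by rw [h0, h]) this
    · exact h
  have p2 : psum K 2 = 3 := by
    rw [psum_succ, p1, hK1]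
  have hK2 : K 2 = 2 := by
    have := r1.1 2 (by rw [p1]; omega) (by rw [p2]; omega)
    rw [p1, hK1] at this
    exact this
  have hK3 : K 3 = 1 := by
    have := r1.2
    rw [p1, p2, hK1] at this
    rcases hK.1 3 with h | h
    · exact h
    · exact absurd (by rw [h]) this
  exact ⟨h0, hK1, hK2, hK3⟩

/-- Number of indices `i < m` with `K i = v`. -/
def cnt (v m : ℕ) : ℕ := ∑ i ∈ Finset.range m, (if K i = v then 1 else 0)

lemma cnt_sum (hK : IsKolakoski K) (m : ℕ) : cnt K 1 m + cnt K 2 m = m := by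
  induction m with
  | zero => simp [cnt]
  | succ n ih =>
    simp only [cnt, Finset.sum_range_succ] at *
    rcases hK.1 n with h | h <;> rw [h] <;> split_ifs <;> omega

lemma psum_eq (hK : IsKolakoski K) (m : ℕ) :
    psum K m = cnt K 1 m + 2 * cnt K 2 m := by
  induction m with
  | zero => simp [psum, cnt]
  | succ n ih =>
    simp only [psum, cnt, Finset.sum_range_succ] at *
    rcases hK.1 n with h | h <;> rw [h] <;> split_ifs <;> omega

lemma triple (hK : IsKolakoski K) (a : ℕ) :
    (K a = 1 ∨ K (a + 1) = 1 ∨ K (a + 2) = 1) ∧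
    (K a = 2 ∨ K (a + 1) = 2 ∨ K (a + 2) = 2) := by
  have h3 := no_three K hK a
  rcases hK.1 a with h | h <;> rcases hK.1 (a + 1) with h' | h' <;>
    rcases hK.1 (a + 2) with h'' | h'' <;> simp_all

lemma cnt_step (v a : ℕ) :
    cnt K v (a + 3) = cnt K v a + ((if K a = v then 1 else 0) +
      (if K (a + 1) = v then 1 else 0) + (if K (a + 2) = v then 1 else 0)) := by
  simp only [cnt, show a + 3 = a + 1 + 1 + 1 from rfl, Finset.sum_range_succ]
  ring

lemma main_cnt (hK : IsKolakoski K) :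
    ∀ m, 2 ≤ m → m ≤ 5 * cnt K 1 m ∧ m ≤ 5 * cnt K 2 m := by
  intro m
  induction m using Nat.strong_induction_on with
  | _ m ih =>
    intro hm
    obtain ⟨h0, h1, h2, h3⟩ := K_vals K hK
    match m, hm with
    | 2, _ =>
      constructor <;>
        · simp only [cnt, Finset.sum_range_succ, Finset.sum_range_zero, h0, h1]
          norm_num
    | 3, _ =>
      constructor <;>
        · simp only [cnt, Finset.sum_range_succ, Finset.sum_range_zero, h0, h1, h2]
          norm_num
    | 4, _ =>
      constructor <;>
        · simp only [cnt, Finset.sum_range_succ, Finset.sum_range_zero, h0, h1, h2, h3]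
          norm_num
    | (k + 5), _ =>
      have hk : k + 2 < k + 5 := by omega
      obtain ⟨ih1, ih2⟩ := ih (k + 2) hk (by omega)
      obtain ⟨t1, t2⟩ := triple K hK (k + 2)
      have e1 := cnt_step K 1 (k + 2)
      have e2 := cnt_step K 2 (k + 2)
      have hone : 1 ≤ (if K (k + 2) = 1 then 1 else 0) +
          (if K (k + 2 + 1) = 1 then 1 else 0) + (if K (k + 2 + 2) = 1 then 1 else 0) := by
        rcases t1 with h | h | h <;> split_ifs <;> omega
      have htwo : 1 ≤ (if K (k + 2) = 2 then 1 else 0) +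
          (if K (k + 2 + 1) = 2 then 1 else 0) + (if K (k + 2 + 2) = 2 then 1 else 0) := by
        rcases t2 with h | h | h <;> split_ifs <;> omega
      have : k + 2 + 3 = k + 5 := by omega
      rw [this] at e1 e2
      omega

end KolAux

/-- For every `m ≥ 2`, the sum of the first `m` letters of the
classical Kolakoski sequence satisfies `(6/5)·m ≤ K₁ + ⋯ + K_m ≤ (9/5)·m`. -/
theorem kolakoski_psum_bounds (K : ℕ → ℕ) (hK : IsKolakoski K)
    (m : ℕ) (hm : 2 ≤ m) :
    6 * m ≤ 5 * psum K m ∧ 5 * psum K m ≤ 9 * m := by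
  have hsum := KolAux.cnt_sum K hK m
  have heq := KolAux.psum_eq K hK m
  have hcnt := KolAux.main_cnt K hK m hm
  omega
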